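/- The algebra ℚ[Y, Z] generated by Y = Σ n^{n-1} q^n/n! and Z = Σ n^n q^n/n! is isomorphic as a ℚ-algebra to the Laurent polynomial ring ℚ[X, X^{-1}], via X = 1 − Y. -/

import Mathlib

open Polynomial Finset

lemma findiff {A : Type*} [CommRing A] [IsDomain A] : ∀ (m : ℕ) (g : A[X]), g.degree < (m : ℕ) →
    ∑ k ∈ range (m+1), (-1:A)^k * (m.choose k) * g.eval (k:A) = 0 := by
  intro m
  induction m with
  | zero =>
    intro g hg
    have : g = 0 := by
      have := Nat.WithBot.lt_zero_iff (n := g.degree) |>.mp (by exact_mod_cast hg)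
      exact Polynomial.degree_eq_bot.mp this
    simp [this]
  | succ m ih =>
    intro g hg
    set h : A[X] := g - taylor 1 g with hh
    have hdeg : h.degree < (m : ℕ) := by
      rcases le_or_gt g.degree 0 with h0 | h0
      · have hgc := Polynomial.eq_C_of_degree_le_zero h0
        have : h = 0 := by rw [hh, hgc]; simp [taylor_apply]
        rw [this, Polynomial.degree_zero]
        exact WithBot.bot_lt_coe m
      · have hg0 : g ≠ 0 := fun h' => by simp [h'] at h0
        have hnd : (taylor 1 g).natDegree = g.natDegree := natDegree_taylor g 1
        have ht0 : taylor 1 g ≠ 0 := fun h' => hg0 (taylor_injective 1 (by simp [h']))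
        have hdeq : g.degree = (taylor 1 g).degree := by
          rw [degree_eq_natDegree hg0, degree_eq_natDegree ht0, hnd]
        have hlc : g.leadingCoeff = (taylor 1 g).leadingCoeff := by
          rw [taylor_apply, leadingCoeff_comp (by rw [natDegree_X_add_C]; exact one_ne_zero),
            (monic_X_add_C (1:A)).leadingCoeff, one_pow, mul_one]
        have h1 : h.degree < g.degree := degree_sub_lt hdeq hg0 hlc
        have h2 : g.natDegree < m + 1 := (natDegree_lt_iff_degree_lt hg0).mpr (by exact_mod_cast hg)
        have h3 : g.degree ≤ (m : ℕ) := by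
          rw [degree_eq_natDegree hg0]
          exact_mod_cast Nat.lt_succ_iff.mp h2
        exact lt_of_lt_of_le h1 h3
    have key : ∑ k ∈ range (m+1+1), (-1:A)^k * ((m+1).choose k) * g.eval (k:A)
        = ∑ k ∈ range (m+1), (-1:A)^k * (m.choose k) * h.eval (k:A) := by
      have hev : ∀ k : ℕ, h.eval (k:A) = g.eval (k:A) - g.eval ((k:A)+1) := by
        intro k
        rw [hh]
        simp [taylor_eval]
      rw [Finset.sum_range_succ']
      have e1 : ∀ i ∈ range (m+1), (-1:A)^(i+1) * (((m+1).choose (i+1) : ℕ)) * g.eval ((i+1:ℕ):A)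
          = ((-1:A)^(i+1) * (m.choose i) * g.eval ((i:A)+1)) + ((-1:A)^(i+1) * (m.choose (i+1)) * g.eval ((i:A)+1)) := by
        intro i _
        rw [Nat.choose_succ_succ]
        push_cast
        ring
      rw [Finset.sum_congr rfl e1, Finset.sum_add_distrib]
      have e2 : ∑ i ∈ range (m+1), (-1:A)^(i+1) * (m.choose (i+1)) * g.eval ((i:A)+1)
          = ∑ i ∈ range m, (-1:A)^(i+1) * (m.choose (i+1)) * g.eval ((i:A)+1) := by
        rw [Finset.sum_range_succ]
        simp
      rw [e2]
      have e3 : ∑ k ∈ range (m+1), (-1:A)^k * (m.choose k) * h.eval (k:A)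
          = ∑ k ∈ range (m+1), ((-1:A)^k * (m.choose k) * g.eval (k:A) + (-1:A)^(k+1) * (m.choose k) * g.eval ((k:A)+1)) := by
        refine Finset.sum_congr rfl fun k _ => ?_
        rw [hev k]
        ring
      rw [e3, Finset.sum_add_distrib]
      nth_rewrite 2 [Finset.sum_range_succ']
      push_cast
      simp only [Nat.choose_zero_right, Nat.cast_one]
      ring
    rw [key]
    exact ih h hdeg


lemma neg_one_pow_sub {R : Type*} [CommRing R] {k m : ℕ} (h : k ≤ m) :
    (-1:R)^(m-k) = (-1)^m * (-1)^k := by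
  have h1 : (-1:R)^(m-k) * (-1)^k = (-1)^m := by
    rw [← pow_add, Nat.sub_add_cancel h]
  calc (-1:R)^(m-k) = (-1:R)^(m-k) * ((-1)^k * (-1)^k) := by
        rw [← mul_pow]; norm_num
    _ = (-1)^m * (-1)^k := by rw [← mul_assoc, h1]


lemma poly_eq {R : Type*} [CommRing R] [IsDomain R] [CharZero R] {P Q : R[X]} (a : R)
    (h1 : derivative P = derivative Q) (h2 : P.eval a = Q.eval a) : P = Q := by
  have h3 : (P - Q).natDegree = 0 :=
    natDegree_eq_zero_of_derivative_eq_zero (by rw [derivative_sub, h1, sub_self])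
  obtain ⟨c, hc⟩ := Polynomial.natDegree_eq_zero.mp h3
  have hc0 : c = 0 := by
    have := congrArg (Polynomial.eval a) hc
    simp [h2] at this
    exact this
  have : P - Q = 0 := by rw [← hc, hc0, map_zero]
  exact sub_eq_zero.mp this


lemma choose_aux {n k : ℕ} (hk : k ≤ n) : (n+1-k) * ((n+1).choose k) = (n+1) * (n.choose k) := by
  have h1 := Nat.add_one_mul_choose_eq n (n-k)
  rw [Nat.choose_symm hk] at h1
  have h2 : (n-k) + 1 = n + 1 - k := by omega
  rw [h2, Nat.choose_symm (by omega : k ≤ n+1)] at h1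
  simpa [Nat.succ_eq_add_one, mul_comm] using h1.symm


noncomputable def fk (k : ℕ) : ℚ[X] := if k = 0 then 1 else X * (X + (k:ℚ[X]))^(k-1)


lemma abel : ∀ n : ℕ, ∑ k ∈ range (n+1),
      ((n.choose k : ℕ) : ℚ[X][X]) * Polynomial.C (fk k) * (Polynomial.X + ((n - k : ℕ) : ℚ[X][X]))^(n-k)
    = (Polynomial.X + Polynomial.C (X : ℚ[X]) + ((n : ℕ) : ℚ[X][X]))^n := by
  intro n
  induction n with
  | zero => simp [fk]
  | succ n ih =>
    have hcomp : ∑ k ∈ range (n+1),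
        ((n.choose k : ℕ) : ℚ[X][X]) * C (fk k) * ((X : ℚ[X][X]) + ((n + 1 - k : ℕ) : ℚ[X][X]))^(n-k)
        = ((X : ℚ[X][X]) + C (X : ℚ[X]) + ((n+1 : ℕ) : ℚ[X][X]))^n := by
      have h0 := congrArg (Polynomial.aeval (X + 1 : ℚ[X][X])) ih
      simp only [map_sum, map_mul, map_pow, map_add, map_natCast, aeval_X, aeval_C, map_one,
        Polynomial.algebraMap_eq] at h0
      calc ∑ k ∈ range (n+1),
          ((n.choose k : ℕ) : ℚ[X][X]) * C (fk k) * ((X : ℚ[X][X]) + ((n + 1 - k : ℕ) : ℚ[X][X]))^(n-k)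
          = ∑ k ∈ range (n+1),
          ((n.choose k : ℕ) : ℚ[X][X]) * C (fk k) * ((X : ℚ[X][X]) + 1 + ((n - k : ℕ) : ℚ[X][X]))^(n-k) := by
            refine Finset.sum_congr rfl fun k hk => ?_
            have hk' : k ≤ n := Nat.lt_succ_iff.mp (mem_range.mp hk)
            have : ((n+1-k : ℕ) : ℚ[X][X]) = ((n-k:ℕ):ℚ[X][X]) + 1 := by
              have h' : n+1-k = (n-k)+1 := by omega
              rw [h']; push_cast; ring
            rw [this]; ring_nf
      _ = ((X : ℚ[X][X]) + C (X : ℚ[X]) + ((n+1 : ℕ) : ℚ[X][X]))^n := by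
            rw [h0]; congr 1; push_cast; ring
    apply poly_eq (a := -(X : ℚ[X]) - (n:ℚ[X]) - 1)
    · -- derivatives agree
      have dLHS : derivative (∑ k ∈ range (n+1+1),
          (((n+1).choose k : ℕ) : ℚ[X][X]) * C (fk k) * ((X:ℚ[X][X]) + ((n+1-k : ℕ) : ℚ[X][X]))^(n+1-k))
          = ∑ k ∈ range (n+1+1), (((n+1).choose k : ℕ) : ℚ[X][X]) * C (fk k) *
              (((n+1-k : ℕ) : ℚ[X][X]) * ((X:ℚ[X][X]) + ((n+1-k : ℕ) : ℚ[X][X]))^(n+1-k-1)) := by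
        rw [derivative_sum]
        refine Finset.sum_congr rfl fun k hk => ?_
        simp [derivative_mul, derivative_pow]
      rw [dLHS, derivative_pow]
      have peel : ∑ k ∈ range (n+1+1), (((n+1).choose k : ℕ) : ℚ[X][X]) * C (fk k) *
              (((n+1-k : ℕ) : ℚ[X][X]) * ((X:ℚ[X][X]) + ((n+1-k : ℕ) : ℚ[X][X]))^(n+1-k-1))
          = ((n+1 : ℕ) : ℚ[X][X]) * ∑ k ∈ range (n+1),
              ((n.choose k : ℕ) : ℚ[X][X]) * C (fk k) * ((X : ℚ[X][X]) + ((n + 1 - k : ℕ) : ℚ[X][X]))^(n-k) := by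
        rw [Finset.sum_range_succ]
        simp only [Nat.sub_self, Nat.cast_zero, zero_mul, mul_zero, add_zero]
        rw [Finset.mul_sum]
        refine Finset.sum_congr rfl fun k hk => ?_
        have hk' : k ≤ n := Nat.lt_succ_iff.mp (mem_range.mp hk)
        have h1 : n+1-k-1 = n-k := by omega
        have h2 : (((n+1-k : ℕ) : ℚ[X][X])) * (((n+1).choose k : ℕ) : ℚ[X][X])
            = ((n+1 : ℕ) : ℚ[X][X]) * ((n.choose k : ℕ) : ℚ[X][X]) := by
          rw [← Nat.cast_mul, ← Nat.cast_mul, choose_aux hk']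
        rw [h1]
        calc (((n+1).choose k : ℕ) : ℚ[X][X]) * C (fk k) *
              (((n+1-k : ℕ) : ℚ[X][X]) * ((X:ℚ[X][X]) + ((n+1-k : ℕ) : ℚ[X][X]))^(n-k))
            = (((n+1-k : ℕ) : ℚ[X][X]) * (((n+1).choose k : ℕ) : ℚ[X][X])) * C (fk k) *
              (((X:ℚ[X][X]) + ((n+1-k : ℕ) : ℚ[X][X]))^(n-k)) := by ring
          _ = _ := by rw [h2]; ring
      rw [peel, hcomp]
      simp
    · -- evaluations agree
      have hRHS : Polynomial.eval (-(X : ℚ[X]) - (n:ℚ[X]) - 1)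
          (((X : ℚ[X][X]) + C (X : ℚ[X]) + ((n+1 : ℕ) : ℚ[X][X]))^(n+1)) = 0 := by
        rw [eval_pow]
        have : Polynomial.eval (-(X : ℚ[X]) - (n:ℚ[X]) - 1)
            ((X : ℚ[X][X]) + C (X : ℚ[X]) + ((n+1 : ℕ) : ℚ[X][X])) = 0 := by
          simp
          push_cast
          ring
        rw [this, zero_pow (Nat.succ_ne_zero n)]
      rw [hRHS, eval_finset_sum]
      have term : ∀ k ∈ range (n+1+1),
          Polynomial.eval (-(X : ℚ[X]) - (n:ℚ[X]) - 1)
            ((((n+1).choose k : ℕ) : ℚ[X][X]) * C (fk k) * ((X:ℚ[X][X]) + ((n+1-k : ℕ) : ℚ[X][X]))^(n+1-k))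
          = (-1:ℚ[X])^(n+1) * ((-1:ℚ[X])^k * (((n+1).choose k : ℕ) : ℚ[X]) *
              Polynomial.eval ((k:ℕ) : ℚ[X]) ((C (X:ℚ[X]) + X)^n)) * (X : ℚ[X]) := by
        intro k hk
        have hk' : k ≤ n+1 := Nat.lt_succ_iff.mp (mem_range.mp hk)
        have he : (-(X : ℚ[X]) - (n:ℚ[X]) - 1) + ((n+1-k : ℕ) : ℚ[X]) = -((X:ℚ[X]) + (k:ℚ[X])) := by
          push_cast [Nat.cast_sub hk']
          ring
        have hg : Polynomial.eval ((k:ℕ) : ℚ[X]) ((C (X:ℚ[X]) + X)^n) = ((X:ℚ[X]) + (k:ℚ[X]))^n := by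
          simp
        rw [hg, eval_mul, eval_mul, eval_natCast, eval_C, eval_pow, eval_add, eval_X, eval_natCast, he,
          neg_pow]
        rcases Nat.eq_zero_or_pos k with rfl | hkpos
        · simp only [fk, if_true, ite_true, eq_self_iff_true, Nat.choose_zero_right, Nat.cast_one,
            Nat.sub_zero, Nat.cast_zero, add_zero, pow_zero]
          ring
        · rw [fk, if_neg (Nat.pos_iff_ne_zero.mp hkpos)]
          have hpow : ((X:ℚ[X]) + (k:ℚ[X]))^(k-1) * ((X:ℚ[X]) + (k:ℚ[X]))^(n+1-k) = ((X:ℚ[X]) + (k:ℚ[X]))^n := by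
            rw [← pow_add]
            congr 1
            omega
          rw [neg_one_pow_sub hk', ← hpow]
          ring
      rw [Finset.sum_congr rfl term]
      have hdeg : ((C (X:ℚ[X]) + X : ℚ[X][X])^n).degree < ((n+1 : ℕ) : WithBot ℕ) := by
        have h1 : ((C (X:ℚ[X]) + X : ℚ[X][X])^n).natDegree = n := by
          rw [natDegree_pow, add_comm, natDegree_X_add_C, mul_one]
        calc ((C (X:ℚ[X]) + X : ℚ[X][X])^n).degree ≤ (((C (X:ℚ[X]) + X : ℚ[X][X])^n).natDegree : WithBot ℕ) :=
              degree_le_natDegree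
          _ < _ := by rw [h1]; exact_mod_cast Nat.lt_succ_self n
      have hfd := findiff (n+1) ((C (X:ℚ[X]) + X : ℚ[X][X])^n) hdeg
      calc ∑ k ∈ range (n+1+1), (-1:ℚ[X])^(n+1) * ((-1:ℚ[X])^k * (((n+1).choose k : ℕ) : ℚ[X]) *
              Polynomial.eval ((k:ℕ) : ℚ[X]) ((C (X:ℚ[X]) + X)^n)) * (X : ℚ[X])
          = (-1:ℚ[X])^(n+1) * (∑ k ∈ range (n+1+1), (-1:ℚ[X])^k * (((n+1).choose k : ℕ) : ℚ[X]) *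
              Polynomial.eval ((k:ℕ) : ℚ[X]) ((C (X:ℚ[X]) + X)^n)) * (X : ℚ[X]) := by
            rw [Finset.mul_sum, Finset.sum_mul]
        _ = 0 := by rw [hfd]; ring


lemma key {n : ℕ} (hn : 1 ≤ n) :
    ∑ k ∈ Finset.Ico 1 n, (n.choose k : ℚ) * (k:ℚ)^(k-1) * ((n-k : ℕ):ℚ)^(n-k)
      = (n:ℚ)^n - (n:ℚ)^(n-1) := by
  have E := abel n
  have E0 := congrArg (Polynomial.eval (0 : ℚ[X])) E
  simp only [eval_finset_sum, eval_mul, eval_pow, eval_add, eval_natCast, eval_C, eval_X,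
    zero_add] at E0
  have E1 := congrArg (fun p : ℚ[X] => Polynomial.eval (0:ℚ) (derivative p)) E0
  simp only [derivative_sum, derivative_mul, derivative_pow, derivative_natCast, derivative_add,
    derivative_X, derivative_one, eval_finset_sum, eval_add, eval_mul, eval_pow, eval_natCast,
    eval_X, eval_C, zero_mul, mul_zero, zero_add, add_zero, mul_one, one_mul] at E1
  have hfk0 : ∀ k : ℕ, 1 ≤ k → Polynomial.eval 0 (derivative (fk k)) = (k:ℚ)^(k-1) := by
    intro k hk
    rw [fk, if_neg (by omega)]
    simp [derivative_mul, derivative_pow]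
  rw [Finset.sum_range_succ, Finset.range_eq_Ico,
    Finset.sum_eq_sum_Ico_succ_bot (by omega : 0 < n)] at E1
  have h00 : Polynomial.eval (0:ℚ) (derivative (fk 0)) = 0 := by
    rw [fk, if_pos rfl]
    simp
  rw [h00] at E1
  have hnn : Polynomial.eval (0:ℚ) (derivative (fk n)) = (n:ℚ)^(n-1) := hfk0 n hn
  rw [hnn] at E1
  simp only [Nat.sub_self, Nat.cast_zero, pow_zero, mul_one, mul_zero, zero_mul, zero_add,
    Nat.choose_self, Nat.cast_one, one_mul] at E1
  have hgoal : ∑ k ∈ Finset.Ico 1 n, (n.choose k : ℚ) * (k:ℚ)^(k-1) * ((n-k : ℕ):ℚ)^(n-k)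
      = ∑ k ∈ Finset.Ico 1 n, (n.choose k : ℚ) * Polynomial.eval (0:ℚ) (derivative (fk k)) * ((n-k : ℕ):ℚ)^(n-k) := by
    refine Finset.sum_congr rfl fun k hk => ?_
    rw [hfk0 k (Finset.mem_Ico.mp hk).1]
  rw [hgoal]
  have hpow : (n:ℚ)^n = (n:ℚ) * (n:ℚ)^(n-1) := by
    have h : n = (n-1) + 1 := by omega
    calc (n:ℚ)^n = (n:ℚ)^((n-1)+1) := by rw [← h]
      _ = _ := by rw [pow_succ]; ring
  rw [hpow]
  linarith [E1]


/-- `Y(q) = Σ_{n≥1} n^{n-1} q^n / n!`. -/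
noncomputable def Y : PowerSeries ℚ :=
  PowerSeries.mk fun n => if n = 0 then 0 else (n : ℚ) ^ (n - 1) / n.factorial

/-- `Z(q) = Σ_{n≥1} n^n q^n / n!`. -/
noncomputable def Z : PowerSeries ℚ :=
  PowerSeries.mk fun n => if n = 0 then 0 else (n : ℚ) ^ n / n.factorial


lemma hYZ : (1 - Y) * (1 + Z) = 1 := by
  have h : Z - Y - Y * Z = 0 := by
    ext n
    rw [map_sub, map_sub, PowerSeries.coeff_mul, Finset.Nat.sum_antidiagonal_eq_sum_range_succ_mk]
    simp only [Y, Z, PowerSeries.coeff_mk, map_zero]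
    rcases Nat.eq_zero_or_pos n with rfl | hn
    · simp
    · rw [if_neg (by omega), if_neg (by omega), Finset.sum_range_succ, Finset.range_eq_Ico,
        Finset.sum_eq_sum_Ico_succ_bot (by omega : 0 < n)]
      rw [if_pos rfl, zero_mul, zero_add, if_pos (by omega : n - n = 0), mul_zero, add_zero]
      have hterm : ∀ k ∈ Finset.Ico 1 n,
          (if k = 0 then (0:ℚ) else (k:ℚ)^(k-1)/k.factorial) *
            (if n - k = 0 then (0:ℚ) else ((n-k:ℕ):ℚ)^(n-k)/(n-k).factorial)
          = (n.choose k : ℚ) * (k:ℚ)^(k-1) * ((n-k:ℕ):ℚ)^(n-k) / n.factorial := by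
        intro k hk
        obtain ⟨hk1, hk2⟩ := Finset.mem_Ico.mp hk
        rw [if_neg (by omega), if_neg (by omega)]
        have hfac : (n.factorial : ℚ) = (n.choose k : ℚ) * k.factorial * (n-k).factorial := by
          exact_mod_cast (Nat.choose_mul_factorial_mul_factorial (by omega : k ≤ n)).symm
        rw [div_mul_div_comm, div_eq_div_iff
          (mul_ne_zero (Nat.cast_ne_zero.mpr k.factorial_ne_zero)
            (Nat.cast_ne_zero.mpr (n-k).factorial_ne_zero))
          (Nat.cast_ne_zero.mpr n.factorial_ne_zero), hfac]
        ring
      rw [Finset.sum_congr rfl hterm, ← Finset.sum_div, key hn]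
      ring
  calc (1 - Y) * (1 + Z) = 1 + (Z - Y - Y * Z) := by ring
    _ = 1 := by rw [h, add_zero]


noncomputable def W : PowerSeries ℚ :=
  PowerSeries.mk fun n => ((n+1:ℕ):ℚ)^n / (n+1).factorial

lemma hW1 : PowerSeries.constantCoeff W = 1 := by
  rw [← PowerSeries.coeff_zero_eq_constantCoeff_apply]
  simp [W]

lemma hYW : Y = PowerSeries.X * W := by
  ext n
  cases n with
  | zero => simp [Y, PowerSeries.coeff_zero_eq_constantCoeff_apply]
  | succ m =>
    rw [PowerSeries.coeff_succ_X_mul]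
    simp [Y, W, Nat.add_sub_cancel]

lemma transY : ∀ g : ℚ[X], Polynomial.aeval Y g = 0 → g = 0 := by
  intro g hg
  by_contra hg0
  set d := g.natTrailingDegree with hd
  have hYpow : ∀ i : ℕ, (Y:PowerSeries ℚ)^i = PowerSeries.X^i * W^i := by
    intro i; rw [hYW, mul_pow]
  have hlt : ∀ i : ℕ, d < i → PowerSeries.coeff d (Y^i) = 0 := by
    intro i hi
    rw [hYpow]
    exact PowerSeries.X_pow_dvd_iff.mp (dvd_mul_right _ _) d hi
  have heq : PowerSeries.coeff d (Y^d) = 1 := by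
    rw [hYpow]
    have := PowerSeries.coeff_X_pow_mul (W^d) d 0
    rw [zero_add] at this
    rw [this, PowerSeries.coeff_zero_eq_constantCoeff_apply, map_pow, hW1, one_pow]
  have hco := congrArg (PowerSeries.coeff d) hg
  rw [Polynomial.aeval_eq_sum_range, map_sum, map_zero] at hco
  have hsum : ∑ i ∈ Finset.range (g.natDegree + 1),
      PowerSeries.coeff d (g.coeff i • Y^i) = g.coeff d := by
    rw [Finset.sum_eq_single d]
    · rw [LinearMap.map_smul, heq, smul_eq_mul, mul_one]
    · intro i _ hne
      rcases lt_or_gt_of_ne hne with hlt' | hgt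
      · rw [Polynomial.coeff_eq_zero_of_lt_natTrailingDegree hlt', zero_smul, map_zero]
      · rw [LinearMap.map_smul, hlt i hgt, smul_zero]
    · intro habs
      exact absurd (Finset.mem_range.mpr (Nat.lt_succ_of_le (g.natTrailingDegree_le_natDegree))) habs
  rw [hsum] at hco
  exact hg0 (Polynomial.trailingCoeff_eq_zero.mp hco)

noncomputable def u : (PowerSeries ℚ)ˣ :=
  { val := 1 - Y, inv := 1 + Z, val_inv := hYZ, inv_val := by rw [mul_comm]; exact hYZ }

noncomputable def φ : LaurentPolynomial ℚ →ₐ[ℚ] PowerSeries ℚ :=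
  AddMonoidAlgebra.lift ℚ (PowerSeries ℚ) ℤ ((Units.coeHom (PowerSeries ℚ)).comp (zpowersHom (PowerSeries ℚ)ˣ u))

lemma hφT (m : ℤ) : φ (LaurentPolynomial.T m) = ((u ^ m : (PowerSeries ℚ)ˣ) : PowerSeries ℚ) := by
  have h1 : (LaurentPolynomial.T m : LaurentPolynomial ℚ)
      = AddMonoidAlgebra.of ℚ ℤ (Multiplicative.ofAdd m) := rfl
  rw [φ, h1, AddMonoidAlgebra.lift_of]
  simp

lemma hφpoly (f : ℚ[X]) : φ (Polynomial.toLaurent f) = Polynomial.aeval ((1:PowerSeries ℚ) - Y) f := by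
  have h : φ.comp Polynomial.toLaurentAlg = Polynomial.aeval ((1:PowerSeries ℚ) - Y) := by
    apply Polynomial.algHom_ext
    rw [AlgHom.comp_apply, Polynomial.toLaurentAlg_apply, Polynomial.toLaurent_X, hφT, Polynomial.aeval_X,
      zpow_one]
    rfl
  have := congrArg (fun ψ : ℚ[X] →ₐ[ℚ] PowerSeries ℚ => ψ f) h
  simpa [Polynomial.toLaurentAlg_apply] using this

lemma hinj : Function.Injective φ := by
  rw [injective_iff_map_eq_zero]
  intro p hp
  obtain ⟨n, f', hf⟩ := p.exists_T_pow
  have h2 : φ (Polynomial.toLaurent f') = 0 := by rw [hf, map_mul, hp, zero_mul]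
  rw [hφpoly] at h2
  have hf0 : f' = 0 := by
    have hcomp : Polynomial.aeval Y (f'.comp (1 - Polynomial.X)) = 0 := by
      rw [Polynomial.aeval_comp]
      simpa using h2
    have h3 := transY _ hcomp
    have hinv : (f'.comp (1 - Polynomial.X)).comp (1 - Polynomial.X) = f' := by
      rw [Polynomial.comp_assoc]
      simp
    rw [← hinv, h3, Polynomial.zero_comp]
  rw [hf0] at hf
  have h4 : p * LaurentPolynomial.T (n:ℤ) = 0 := by rw [← hf]; simp
  exact (LaurentPolynomial.isUnit_T (n:ℤ)).mul_left_eq_zero.mp h4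

lemma hrange : φ.range = Algebra.adjoin ℚ ({Y, Z} : Set (PowerSeries ℚ)) := by
  have hYmem : Y ∈ Algebra.adjoin ℚ ({Y, Z} : Set (PowerSeries ℚ)) :=
    Algebra.subset_adjoin (Set.mem_insert _ _)
  have hZmem : Z ∈ Algebra.adjoin ℚ ({Y, Z} : Set (PowerSeries ℚ)) :=
    Algebra.subset_adjoin (Set.mem_insert_of_mem _ rfl)
  apply le_antisymm
  · intro x hx
    obtain ⟨p, rfl⟩ := (AlgHom.mem_range φ).mp hx
    induction p using LaurentPolynomial.induction_on_mul_T with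
    | mul_T =>
      rename_i f n
      rw [map_mul, hφpoly, hφT (-(n:ℤ))]
      have h1 : ((u ^ (-(n:ℤ)) : (PowerSeries ℚ)ˣ) : PowerSeries ℚ) = (1 + Z)^n := by
        rw [zpow_neg, zpow_natCast, ← inv_pow, Units.val_pow_eq_pow_val]
        rfl
      rw [h1]
      apply mul_mem
      · have h2 : Polynomial.aeval ((1:PowerSeries ℚ) - Y) f
            ∈ Algebra.adjoin ℚ ({(1:PowerSeries ℚ) - Y} : Set (PowerSeries ℚ)) := by
          rw [Algebra.adjoin_singleton_eq_range_aeval]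
          exact ⟨f, rfl⟩
        exact Algebra.adjoin_le (Set.singleton_subset_iff.mpr (sub_mem (one_mem _) hYmem)) h2
      · exact pow_mem (add_mem (one_mem _) hZmem) n
  · apply Algebra.adjoin_le
    rintro x (rfl | rfl)
    · rw [SetLike.mem_coe, AlgHom.mem_range φ]
      refine ⟨1 - LaurentPolynomial.T 1, ?_⟩
      rw [map_sub, map_one, hφT, zpow_one]
      show 1 - ((1:PowerSeries ℚ) - Y) = Y
      ring
    · rw [SetLike.mem_coe, AlgHom.mem_range φ]
      refine ⟨LaurentPolynomial.T (-1) - 1, ?_⟩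
      rw [map_sub, map_one, hφT]
      show ((u ^ (-1:ℤ) : (PowerSeries ℚ)ˣ) : PowerSeries ℚ) - 1 = Z
      rw [zpow_neg, zpow_one]
      show (1 + Z) - 1 = Z
      ring

/-- The algebra `𝒜 = ℚ[Y,Z]` is isomorphic as a `ℚ`-algebra to the Laurent
polynomial ring `ℚ[X, X⁻¹]`, via `X = 1 - Y`. -/
theorem adjoin_iso_laurent :
    ∃ e : LaurentPolynomial ℚ ≃ₐ[ℚ] Algebra.adjoin ℚ ({Y, Z} : Set (PowerSeries ℚ)),
      (e (LaurentPolynomial.T 1) : PowerSeries ℚ) = 1 - Y := by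
  refine ⟨(AlgEquiv.ofInjective φ hinj).trans (Subalgebra.equivOfEq _ _ hrange), ?_⟩
  have h1 : (((AlgEquiv.ofInjective φ hinj).trans (Subalgebra.equivOfEq _ _ hrange))
      (LaurentPolynomial.T 1) : PowerSeries ℚ) = φ (LaurentPolynomial.T 1) := rfl
  rw [h1, hφT, zpow_one]
  rfl
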